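/- arXiv:1610.01098 — 4 statements merged into one kernel-verified Lean document; each statement's English description precedes it below -/
import Mathlib

section
/- Let g be a real Lie algebra containing elements u, v, w with [u,v] = A·v + B·w, [u,w] = -B·v + A·w, [v,w] = c₁·u + c₂·v + c₃·w for reals A, B, c₁, c₂, c₃ (with arbitrary remaining brackets determined by antisymmetry in span{u,v,w}). On the product Lie algebra g × g, define the linear map 𝒥 by 𝒥(u,0) = (0,u), 𝒥(0,u) = (-u,0), 𝒥(v,0) = (w,0), 𝒥(w,0) = (-v,0), 𝒥(0,v) = (0,w), 𝒥(0,w) = (0,-v). Then 𝒥² = -id on the span of these six vectors, and the Nijenhuis tensor of 𝒥 vanishes on the pair ((u,0),(v,0)). -/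
/-- Componentwise bracket on the product. -/
instance prodBracket {L : Type*} [LieRing L] : Bracket (L × L) (L × L) :=
  ⟨fun x y => (⁅x.1, y.1⁆, ⁅x.2, y.2⁆)⟩

instance prodLieRing {L : Type*} [LieRing L] : LieRing (L × L) where
  add_lie x y z := by ext <;> simp [Bracket.bracket]
  lie_add x y z := by ext <;> simp [Bracket.bracket]
  lie_self x := by ext <;> simp [Bracket.bracket]
  leibniz_lie x y z := by ext <;> simp [Bracket.bracket]

instance prodLieAlgebra {L : Type*} [LieRing L] [LieAlgebra ℝ L] : LieAlgebra ℝ (L × L) where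
  lie_smul t x y := by ext <;> simp [Bracket.bracket]

/-!
Both claims are computations on the six generators. On the span, `𝒥 ∘ 𝒥 = -id` because two
linear maps agreeing on a set agree on its span. For the Nijenhuis tensor, the terms
`⁅𝒥 (u, 0), (v, 0)⁆` and `⁅𝒥 (u, 0), 𝒥 (v, 0)⁆` vanish since they pair the two factors, so
`N((u,0),(v,0)) = (⁅u, v⁆, 0) + 𝒥 (⁅u, w⁆, 0)`. On `span {v, w}` the operator `ad u` is
`A + B 𝒥₀`, where `𝒥₀` is the rotation `v ↦ w ↦ -v`; it commutes with `𝒥₀`, which gives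
`𝒥 (⁅u, w⁆, 0) = -(⁅u, v⁆, 0)`.
-/

theorem LinearMap.apply_apply_eq_neg_of_mem_span {R M : Type*} [Ring R] [AddCommGroup M]
    [Module R M] (f : M →ₗ[R] M) {s : Set M} (hs : ∀ x ∈ s, f (f x) = -x) ⦃x : M⦄
    (hx : x ∈ Submodule.span R s) : f (f x) = -x :=
  LinearMap.eqOn_span (f := f ∘ₗ f) (g := -LinearMap.id) hs hx

@[simp]
theorem Prod.mk_lie_mk {L : Type*} [LieRing L] (a b c d : L) :
    ⁅((a, b) : L × L), ((c, d) : L × L)⁆ = (⁅a, c⁆, ⁅b, d⁆) :=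
  rfl

section

variable {g : Type*} [LieRing g] [LieAlgebra ℝ g] (𝒥 : (g × g) →ₗ[ℝ] (g × g)) {u v w : g}

theorem nijenhuis_inl_inl_eq (h1 : 𝒥 (u, 0) = (0, u)) (h3 : 𝒥 (v, 0) = (w, 0)) :
    ⁅((u, 0) : g × g), ((v, 0) : g × g)⁆ + 𝒥 ⁅𝒥 (u, 0), ((v, 0) : g × g)⁆
      + 𝒥 ⁅((u, 0) : g × g), 𝒥 (v, 0)⁆ - ⁅𝒥 (u, 0), 𝒥 (v, 0)⁆ = (⁅u, v⁆, 0) + 𝒥 (⁅u, w⁆, 0) := by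
  simp [h1, h3, Prod.mk_zero_zero]

theorem apply_lie_inl_eq_neg {A B : ℝ} (huv : ⁅u, v⁆ = A • v + B • w)
    (huw : ⁅u, w⁆ = -B • v + A • w) (h3 : 𝒥 (v, 0) = (w, 0)) (h4 : 𝒥 (w, 0) = (-v, 0)) :
    𝒥 (⁅u, w⁆, 0) = -(⁅u, v⁆, 0) := by
  have hsplit : ((⁅u, w⁆, 0) : g × g) = (-B) • (v, 0) + A • (w, 0) := by simp [huw]
  rw [hsplit, map_add, map_smul, map_smul, h3, h4, huv]
  ext <;> simp [add_comm]

end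

theorem complex_eigenvalue_case_nijenhuis_uv_general {g : Type*} [LieRing g] [LieAlgebra ℝ g]
    (u v w : g) (A B : ℝ)
    (huv : ⁅u, v⁆ = A • v + B • w)
    (huw : ⁅u, w⁆ = -B • v + A • w)
    (𝒥 : (g × g) →ₗ[ℝ] (g × g))
    (h1 : 𝒥 (u, 0) = (0, u)) (h2 : 𝒥 (0, u) = (-u, 0))
    (h3 : 𝒥 (v, 0) = (w, 0)) (h4 : 𝒥 (w, 0) = (-v, 0))
    (h5 : 𝒥 (0, v) = (0, w)) (h6 : 𝒥 (0, w) = (0, -v)) :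
    (∀ x ∈ Submodule.span ℝ
        ({(u, 0), (0, u), (v, 0), (w, 0), (0, v), (0, w)} : Set (g × g)),
      𝒥 (𝒥 x) = -x) ∧
    ⁅((u, 0) : g × g), ((v, 0) : g × g)⁆ + 𝒥 ⁅𝒥 (u, 0), ((v, 0) : g × g)⁆
      + 𝒥 ⁅((u, 0) : g × g), 𝒥 (v, 0)⁆ - ⁅𝒥 (u, 0), 𝒥 (v, 0)⁆ = 0 := by
  refine ⟨𝒥.apply_apply_eq_neg_of_mem_span ?_, ?_⟩
  · have h2' : 𝒥 (0, u) = -(u, 0) := by simp [h2]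
    have h4' : 𝒥 (w, 0) = -(v, 0) := by simp [h4]
    have h6' : 𝒥 (0, w) = -(0, v) := by simp [h6]
    rintro x (rfl | rfl | rfl | rfl | rfl | rfl) <;>
      simp only [h1, h2', h3, h4', h5, h6', map_neg]
  · rw [nijenhuis_inl_inl_eq 𝒥 h1 h3, apply_lie_inl_eq_neg 𝒥 huv huw h3 h4, add_neg_cancel]

theorem complex_eigenvalue_case_nijenhuis_uv {g : Type*} [LieRing g] [LieAlgebra ℝ g]
    (u v w : g) (A B c₁ c₂ c₃ : ℝ)
    (huv : ⁅u, v⁆ = A • v + B • w)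
    (huw : ⁅u, w⁆ = -B • v + A • w)
    (hvw : ⁅v, w⁆ = c₁ • u + c₂ • v + c₃ • w)
    (𝒥 : (g × g) →ₗ[ℝ] (g × g))
    (h1 : 𝒥 (u, 0) = (0, u)) (h2 : 𝒥 (0, u) = (-u, 0))
    (h3 : 𝒥 (v, 0) = (w, 0)) (h4 : 𝒥 (w, 0) = (-v, 0))
    (h5 : 𝒥 (0, v) = (0, w)) (h6 : 𝒥 (0, w) = (0, -v)) :
    (∀ x ∈ Submodule.span ℝ
        ({(u, 0), (0, u), (v, 0), (w, 0), (0, v), (0, w)} : Set (g × g)),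
      𝒥 (𝒥 x) = -x) ∧
    ⁅((u, 0) : g × g), ((v, 0) : g × g)⁆ + 𝒥 ⁅𝒥 (u, 0), ((v, 0) : g × g)⁆
      + 𝒥 ⁅((u, 0) : g × g), 𝒥 (v, 0)⁆ - ⁅𝒥 (u, 0), 𝒥 (v, 0)⁆ = 0 :=
  complex_eigenvalue_case_nijenhuis_uv_general u v w A B huv huw 𝒥 h1 h2 h3 h4 h5 h6
end

section
/- Let g be a real Lie algebra with basis u, v, w satisfying [u,v] = α·v, [u,w] = α·w, [v,w] = 0 for a real number α. Define 𝒥 on g × g by 𝒥(u,0) = (0,u), 𝒥(0,u) = (-u,0), 𝒥(v,0) = (w,0), 𝒥(w,0) = (-v,0), 𝒥(0,v) = (0,w), 𝒥(0,w) = (0,-v). Then 𝒥² = -id and the Nijenhuis tensor of 𝒥 vanishes identically, i.e. 𝒥 is an integrable complex structure on g × g. -/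
/-!
Write `u, v, w` for `b 0, b 1, b 2`. The space `g × g` is the sum of `U = span {(u,0), (0,u)}` and
`A = a × a` with `a = span {v, w}`; both are abelian and `𝒥`-invariant, so the Nijenhuis tensor
vanishes on `U × U` and on `A × A`. On `U × A` it vanishes because `𝒥² = -1` on `A` and `𝒥`
commutes with `ad x` on `A` for `x ∈ U`: `ad (s u, t u)` acts on `a × 0` and on `0 × a` as the
scalars `s α` and `t α`, and `𝒥` preserves both factors.
-/

open Submodule

section Nijenhuis

variable {R L : Type*} [CommRing R] [LieRing L] [Module R L] (J : L →ₗ[R] L)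

def nijenhuis (x y : L) : L :=
  ⁅x, y⁆ + J ⁅J x, y⁆ + J ⁅x, J y⁆ - ⁅J x, J y⁆

lemma nijenhuis_add_left (x x' y : L) :
    nijenhuis J (x + x') y = nijenhuis J x y + nijenhuis J x' y := by
  simp only [nijenhuis, map_add, add_lie]
  abel

lemma nijenhuis_add_right (x y y' : L) :
    nijenhuis J x (y + y') = nijenhuis J x y + nijenhuis J x y' := by
  simp only [nijenhuis, map_add, lie_add]
  abel

lemma nijenhuis_swap (x y : L) : nijenhuis J y x = -nijenhuis J x y := by
  simp only [nijenhuis, ← lie_skew x, ← lie_skew (J x), map_neg]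
  abel

lemma nijenhuis_eq_zero_of_mem_abelian {S : Submodule R L}
    (hS : ∀ x ∈ S, ∀ y ∈ S, ⁅x, y⁆ = 0) (hJS : S ≤ S.comap J) {x y : L}
    (hx : x ∈ S) (hy : y ∈ S) : nijenhuis J x y = 0 := by
  simp [nijenhuis, hS x hx y hy, hS _ (hJS hx) y hy, hS x hx _ (hJS hy),
    hS _ (hJS hx) _ (hJS hy)]

lemma nijenhuis_eq_zero_of_map_lie_eq_lie_map {U A : Submodule R L}
    (hJU : U ≤ U.comap J) (hJA : A ≤ A.comap J) (hJJ : ∀ p ∈ A, J (J p) = -p)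
    (hcomm : ∀ x ∈ U, ∀ p ∈ A, J ⁅x, p⁆ = ⁅x, J p⁆) {x p : L} (hx : x ∈ U) (hp : p ∈ A) :
    nijenhuis J x p = 0 := by
  have h₁ : J ⁅J x, p⁆ = ⁅J x, J p⁆ := hcomm _ (hJU hx) p hp
  have h₂ : J ⁅x, J p⁆ = -⁅x, p⁆ := by rw [hcomm x hx _ (hJA hp), hJJ p hp, lie_neg]
  rw [nijenhuis, h₁, h₂]
  abel

theorem nijenhuis_eq_zero_of_sup_eq_top {U A : Submodule R L} (hUA : U ⊔ A = ⊤)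
    (hU : ∀ x ∈ U, ∀ y ∈ U, ⁅x, y⁆ = 0) (hA : ∀ p ∈ A, ∀ q ∈ A, ⁅p, q⁆ = 0)
    (hJU : U ≤ U.comap J) (hJA : A ≤ A.comap J) (hJJ : ∀ p ∈ A, J (J p) = -p)
    (hcomm : ∀ x ∈ U, ∀ p ∈ A, J ⁅x, p⁆ = ⁅x, J p⁆) (z w : L) : nijenhuis J z w = 0 := by
  have hdecomp (z : L) : ∃ x ∈ U, ∃ p ∈ A, x + p = z := mem_sup.mp (hUA ▸ mem_top)
  obtain ⟨x, hx, p, hp, rfl⟩ := hdecomp z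
  obtain ⟨y, hy, q, hq, rfl⟩ := hdecomp w
  rw [nijenhuis_add_left, nijenhuis_add_right, nijenhuis_add_right, nijenhuis_swap J y p,
    nijenhuis_eq_zero_of_mem_abelian J hU hJU hx hy,
    nijenhuis_eq_zero_of_mem_abelian J hA hJA hp hq,
    nijenhuis_eq_zero_of_map_lie_eq_lie_map J hJU hJA hJJ hcomm hx hq,
    nijenhuis_eq_zero_of_map_lie_eq_lie_map J hJU hJA hJJ hcomm hy hp]
  simp

lemma map_lie_eq_lie_map_of_mem_sup {x : L} {A₁ A₂ : Submodule R L} {c₁ c₂ : R}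
    (h₁ : ∀ p ∈ A₁, ⁅x, p⁆ = c₁ • p) (h₂ : ∀ p ∈ A₂, ⁅x, p⁆ = c₂ • p)
    (hJ₁ : A₁ ≤ A₁.comap J) (hJ₂ : A₂ ≤ A₂.comap J) {q : L} (hq : q ∈ A₁ ⊔ A₂) :
    J ⁅x, q⁆ = ⁅x, J q⁆ := by
  obtain ⟨p₁, hp₁, p₂, hp₂, rfl⟩ := mem_sup.mp hq
  simp only [lie_add, map_add]
  rw [h₁ p₁ hp₁, h₂ p₂ hp₂, h₁ _ (hJ₁ hp₁), h₂ _ (hJ₂ hp₂), map_smul, map_smul]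

lemma span_pair_le_comap {a b : L} (ha : J a = b) (hb : J b = -a) :
    span R {a, b} ≤ (span R {a, b}).comap J := by
  have hmem_a : a ∈ span R {a, b} := subset_span (by simp)
  have hmem_b : b ∈ span R {a, b} := subset_span (by simp)
  rw [span_le, Set.insert_subset_iff, Set.singleton_subset_iff]
  exact ⟨by simpa [ha] using hmem_b, by simpa [hb] using hmem_a⟩

lemma eqOn_comp_self_neg_of_pair {a b : L} (ha : J a = b) (hb : J b = -a) :
    Set.EqOn (J ∘ₗ J) (-LinearMap.id (R := R)) {a, b} := by
  rintro _ (rfl | rfl) <;> simp [ha, hb]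

end Nijenhuis

section SpanLie

variable {R L : Type*} [CommRing R] [LieRing L] [LieAlgebra R L]

lemma lie_eq_zero_of_mem_span {S : Set L}
    (hS : ∀ x ∈ S, ∀ y ∈ S, ⁅x, y⁆ = 0) {x y : L} (hx : x ∈ span R S) (hy : y ∈ span R S) :
    ⁅x, y⁆ = 0 := by
  induction hx, hy using span_induction₂ with
  | mem_mem x y hx hy => exact hS x hx y hy
  | zero_left => exact zero_lie _
  | zero_right => exact lie_zero _
  | add_left _ _ _ _ _ _ h h' => rw [add_lie, h, h', add_zero]
  | add_right _ _ _ _ _ _ h h' => rw [lie_add, h, h', add_zero]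
  | smul_left _ _ _ _ _ h => rw [smul_lie, h, smul_zero]
  | smul_right _ _ _ _ _ h => rw [lie_smul, h, smul_zero]

lemma lie_eq_smul_of_mem_span {x : L} {c : R} {S : Set L}
    (hS : ∀ p ∈ S, ⁅x, p⁆ = c • p) {p : L} (hp : p ∈ span R S) : ⁅x, p⁆ = c • p := by
  induction hp using span_induction with
  | mem p hp => exact hS p hp
  | zero => rw [lie_zero, smul_zero]
  | add _ _ _ _ h h' => rw [lie_add, h, h', smul_add]
  | smul r _ _ h => rw [lie_smul, h, smul_comm]

end SpanLie

section ProductOfCopies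

variable {g : Type*} [LieRing g]

@[simp]
lemma prod_mk_lie_mk (a b c d : g) : ⁅(a, b), (c, d)⁆ = (⁅a, c⁆, ⁅b, d⁆) := rfl

lemma span_prod_basis_eq_top {R : Type*} [CommRing R] [Module R g]
    (b : Module.Basis (Fin 3) R g) :
    span R ({(b 0, 0), (0, b 0)} ∪ ({(b 1, 0), (b 2, 0)} ∪ {(0, b 1), (0, b 2)})) = ⊤ := by
  refine eq_top_iff.mpr ((b.prod b).span_eq ▸ span_mono ?_)
  rintro _ ⟨i | i, rfl⟩ <;> fin_cases i <;> simp

variable [LieAlgebra ℝ g]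

lemma lie_eq_zero_of_mem_span_inl_inr (u : g) :
    ∀ x ∈ span ℝ {(u, 0), (0, u)}, ∀ y ∈ span ℝ {(u, 0), (0, u)}, ⁅x, y⁆ = 0 := fun _ hx _ hy =>
  lie_eq_zero_of_mem_span (by rintro _ (rfl | rfl) _ (rfl | rfl) <;> simp) hx hy

lemma lie_eq_zero_of_mem_span_sup_span {v w : g} (hvw : ⁅v, w⁆ = 0) :
    ∀ x ∈ span ℝ {(v, 0), (w, 0)} ⊔ span ℝ {(0, v), (0, w)},
    ∀ y ∈ span ℝ {(v, 0), (w, 0)} ⊔ span ℝ {(0, v), (0, w)}, ⁅x, y⁆ = 0 := by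
  intro x hx y hy
  have hwv : ⁅w, v⁆ = 0 := by rw [← lie_skew, hvw, neg_zero]
  rw [← span_union] at hx hy
  exact lie_eq_zero_of_mem_span
    (by rintro _ ((rfl | rfl) | (rfl | rfl)) _ ((rfl | rfl) | (rfl | rfl)) <;> simp [hvw, hwv])
    hx hy

lemma lie_eq_smul_of_mem_span_fst {u v w : g} {α : ℝ} (huv : ⁅u, v⁆ = α • v)
    (huw : ⁅u, w⁆ = α • w) (s t : ℝ) :
    ∀ p ∈ span ℝ {(v, (0 : g)), (w, 0)},
      ⁅s • (u, (0 : g)) + t • ((0 : g), u), p⁆ = (s * α) • p := fun _ =>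
  lie_eq_smul_of_mem_span (by rintro _ (rfl | rfl) <;> simp [huv, huw, smul_smul])

lemma lie_eq_smul_of_mem_span_snd {u v w : g} {α : ℝ} (huv : ⁅u, v⁆ = α • v)
    (huw : ⁅u, w⁆ = α • w) (s t : ℝ) :
    ∀ p ∈ span ℝ {((0 : g), v), (0, w)},
      ⁅s • (u, (0 : g)) + t • ((0 : g), u), p⁆ = (t * α) • p := fun _ =>
  lie_eq_smul_of_mem_span (by rintro _ (rfl | rfl) <;> simp [huv, huw, smul_smul])

end ProductOfCopies

theorem real_eigenvalue_case_integrable {g : Type*} [LieRing g] [LieAlgebra ℝ g]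
    (b : Module.Basis (Fin 3) ℝ g) (α : ℝ)
    (huv : ⁅b 0, b 1⁆ = α • b 1)
    (huw : ⁅b 0, b 2⁆ = α • b 2)
    (hvw : ⁅b 1, b 2⁆ = 0)
    (𝒥 : (g × g) →ₗ[ℝ] (g × g))
    (h1 : 𝒥 (b 0, 0) = (0, b 0)) (h2 : 𝒥 (0, b 0) = (-b 0, 0))
    (h3 : 𝒥 (b 1, 0) = (b 2, 0)) (h4 : 𝒥 (b 2, 0) = (-b 1, 0))
    (h5 : 𝒥 (0, b 1) = (0, b 2)) (h6 : 𝒥 (0, b 2) = (0, -b 1)) :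
    (∀ x : g × g, 𝒥 (𝒥 x) = -x) ∧
    (∀ x y : g × g,
      ⁅x, y⁆ + 𝒥 ⁅𝒥 x, y⁆ + 𝒥 ⁅x, 𝒥 y⁆ - ⁅𝒥 x, 𝒥 y⁆ = 0) := by
  have h2' : 𝒥 (0, b 0) = -(b 0, 0) := by simp [h2]
  have h4' : 𝒥 (b 2, 0) = -(b 1, 0) := by simp [h4]
  have h6' : 𝒥 (0, b 2) = -(0, b 1) := by simp [h6]
  have hspan := span_prod_basis_eq_top b
  have hsq : 𝒥 ∘ₗ 𝒥 = -LinearMap.id := LinearMap.ext_on hspan <|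
    (eqOn_comp_self_neg_of_pair 𝒥 h1 h2').union
      ((eqOn_comp_self_neg_of_pair 𝒥 h3 h4').union (eqOn_comp_self_neg_of_pair 𝒥 h5 h6'))
  have hsq_apply (x : g × g) : 𝒥 (𝒥 x) = -x := LinearMap.congr_fun hsq x
  rw [span_union, span_union] at hspan
  have hJ₁ := span_pair_le_comap 𝒥 h3 h4'
  have hJ₂ := span_pair_le_comap 𝒥 h5 h6'
  refine ⟨hsq_apply, nijenhuis_eq_zero_of_sup_eq_top 𝒥 hspan (lie_eq_zero_of_mem_span_inl_inr _)
    (lie_eq_zero_of_mem_span_sup_span hvw) (span_pair_le_comap 𝒥 h1 h2')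
    (sup_le (hJ₁.trans (comap_mono le_sup_left)) (hJ₂.trans (comap_mono le_sup_right)))
    (fun p _ => hsq_apply p) ?_⟩
  intro x hx p hp
  obtain ⟨s, t, rfl⟩ := mem_span_pair.mp hx
  exact map_lie_eq_lie_map_of_mem_sup 𝒥 (lie_eq_smul_of_mem_span_fst huv huw s t)
    (lie_eq_smul_of_mem_span_snd huv huw s t) hJ₁ hJ₂ hp
end

section
/- Let g be the 3-dimensional real Heisenberg Lie algebra (basis e₁, e₂, e₃ with [e₁,e₂] = e₃ and all other basis brackets zero). Then g × g admits an integrable complex structure. -/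
/-!
Take `𝒥 (x₁, x₂) = (A x₁ - B x₂, B x₁ + A x₂)`, where `A` turns the plane spanned by `b 0, b 1`
by a quarter turn and kills `b 2`, and `B` projects onto the centre `ℝ ∙ b 2`. From `A² - B² = -1`
and `AB + BA = 0` we get `𝒥² = -1`. Moreover `𝒥` is abelian, `⁅𝒥 x, 𝒥 y⁆ = ⁅x, y⁆`: `B` takes
values in the centre, and `A` preserves the bracket because the bracket only sees the plane
components, on which `A` has determinant one. For an abelian `𝒥`, replacing `y` by `𝒥 y` gives
`⁅𝒥 x, y⁆ = -⁅x, 𝒥 y⁆`, and then the Nijenhuis tensor vanishes term by term.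
-/

section AbelianComplexStructure

variable {R L : Type*} [Semiring R] [LieRing L] [Module R L]

structure IsAbelianComplexStructure (J : Module.End R L) : Prop where
  apply_apply : ∀ x, J (J x) = -x
  lie_apply_apply : ∀ x y, ⁅J x, J y⁆ = ⁅x, y⁆

namespace IsAbelianComplexStructure

variable {J : Module.End R L}

theorem lie_apply_add_lie_apply (hJ : IsAbelianComplexStructure J) (x y : L) :
    ⁅J x, y⁆ + ⁅x, J y⁆ = 0 := by
  have hxJy := hJ.lie_apply_apply x (J y)
  rw [hJ.apply_apply, lie_neg] at hxJy
  rw [← hxJy, add_neg_cancel]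

theorem nijenhuis_eq_zero (hJ : IsAbelianComplexStructure J) (x y : L) :
    ⁅x, y⁆ + J ⁅J x, y⁆ + J ⁅x, J y⁆ - ⁅J x, J y⁆ = 0 := by
  rw [add_assoc, ← map_add, hJ.lie_apply_add_lie_apply, map_zero, add_zero,
    hJ.lie_apply_apply, sub_self]

end IsAbelianComplexStructure

end AbelianComplexStructure

section ComplexBlock

variable {R M : Type*} [Semiring R] [AddCommGroup M] [Module R M]

/-- The block matrix `[[A, -B], [B, A]]`, i.e. `A + iB` acting on `M × M ≅ M ⊗ ℂ`. -/
def complexBlock (A B : Module.End R M) : Module.End R (M × M) :=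
  (A ∘ₗ LinearMap.fst R M M - B ∘ₗ LinearMap.snd R M M).prod
    (B ∘ₗ LinearMap.fst R M M + A ∘ₗ LinearMap.snd R M M)

@[simp]
theorem complexBlock_apply (A B : Module.End R M) (x : M × M) :
    complexBlock A B x = (A x.1 - B x.2, B x.1 + A x.2) :=
  rfl

theorem complexBlock_apply_apply {A B : Module.End R M} (hsq : ∀ x, A (A x) - B (B x) = -x)
    (hanti : ∀ x, A (B x) + B (A x) = 0) (x : M × M) :
    complexBlock A B (complexBlock A B x) = -x := by
  ext
  · simp only [complexBlock_apply, map_sub, map_add, Prod.fst_neg]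
    linear_combination (norm := module) hsq x.1 - hanti x.2
  · simp only [complexBlock_apply, map_sub, map_add, Prod.snd_neg]
    linear_combination (norm := module) hsq x.2 + hanti x.1

theorem lie_complexBlock_complexBlock {L : Type*} [LieRing L] [Module R L] {A B : Module.End R L}
    (hA : ∀ x y, ⁅A x, A y⁆ = ⁅x, y⁆) (hB : ∀ x y : L, ⁅B x, y⁆ = 0) (x y : L × L) :
    ⁅complexBlock A B x, complexBlock A B y⁆ = ⁅x, y⁆ := by
  have hB' (x y : L) : ⁅x, B y⁆ = 0 := by rw [← lie_skew, hB, neg_zero]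
  simp only [complexBlock_apply, LieAlgebra.Prod.bracket_apply, lie_sub, sub_lie, lie_add, add_lie,
    hA, hB, hB', sub_zero, zero_add]

theorem isAbelianComplexStructure_complexBlock {L : Type*} [LieRing L] [Module R L]
    {A B : Module.End R L} (hsq : ∀ x, A (A x) - B (B x) = -x)
    (hanti : ∀ x, A (B x) + B (A x) = 0) (hA : ∀ x y, ⁅A x, A y⁆ = ⁅x, y⁆)
    (hB : ∀ x y : L, ⁅B x, y⁆ = 0) :
    IsAbelianComplexStructure (complexBlock A B) :=
  ⟨complexBlock_apply_apply hsq hanti, lie_complexBlock_complexBlock hA hB⟩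

end ComplexBlock

theorem Module.Basis.lie_apply_eq_of_forall_basis {R L ι : Type*} [CommRing R] [LieRing L]
    [LieAlgebra R L] (b : Module.Basis ι R L) {A A' B B' : Module.End R L}
    (h : ∀ i j, ⁅A (b i), A' (b j)⁆ = ⁅B (b i), B' (b j)⁆) (x y : L) :
    ⁅A x, A' y⁆ = ⁅B x, B' y⁆ :=
  let φ : L →ₗ[R] Module.End R L := LieModule.toEnd R L L
  LinearMap.congr_fun₂ (LinearMap.ext_basis b b (B := φ.compl₁₂ A A') (B' := φ.compl₁₂ B B') h) x y

section Heisenberg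

variable {R L : Type*} [CommRing R] [LieRing L] [LieAlgebra R L] (b : Module.Basis (Fin 3) R L)

noncomputable def planeRotation : Module.End R L := b.constr R ![b 1, -b 0, 0]

noncomputable def centreProjection : Module.End R L := b.constr R ![0, 0, b 2]

@[simp]
theorem planeRotation_basis (i : Fin 3) : planeRotation b (b i) = ![b 1, -b 0, 0] i :=
  b.constr_basis R _ i

@[simp]
theorem centreProjection_basis (i : Fin 3) : centreProjection b (b i) = ![0, 0, b 2] i :=
  b.constr_basis R _ i

theorem planeRotation_apply_apply_sub_centreProjection_apply_apply (x : L) :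
    planeRotation b (planeRotation b x) - centreProjection b (centreProjection b x) = -x := by
  have : planeRotation b ∘ₗ planeRotation b - centreProjection b ∘ₗ centreProjection b =
      -LinearMap.id :=
    b.ext fun i => by fin_cases i <;> simp
  exact LinearMap.congr_fun this x

theorem planeRotation_centreProjection_add_centreProjection_planeRotation (x : L) :
    planeRotation b (centreProjection b x) + centreProjection b (planeRotation b x) = 0 := by
  have : planeRotation b ∘ₗ centreProjection b + centreProjection b ∘ₗ planeRotation b = 0 :=
    b.ext fun i => by fin_cases i <;> simp
  exact LinearMap.congr_fun this x

variable {b}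

theorem lie_basis_two_basis (h13 : ⁅b 0, b 2⁆ = 0) (h23 : ⁅b 1, b 2⁆ = 0) (i : Fin 3) :
    ⁅b 2, b i⁆ = 0 :=
  match i with
  | 0 => by rw [← lie_skew, h13, neg_zero]
  | 1 => by rw [← lie_skew, h23, neg_zero]
  | 2 => lie_self _

theorem lie_planeRotation_planeRotation (h13 : ⁅b 0, b 2⁆ = 0) (h23 : ⁅b 1, b 2⁆ = 0) (x y : L) :
    ⁅planeRotation b x, planeRotation b y⁆ = ⁅x, y⁆ :=
  b.lie_apply_eq_of_forall_basis (B := LinearMap.id) (B' := LinearMap.id) (fun i j => by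
    fin_cases i <;> fin_cases j <;> simp [h13, h23, lie_basis_two_basis h13 h23]) x y

theorem lie_centreProjection_eq_zero (h13 : ⁅b 0, b 2⁆ = 0) (h23 : ⁅b 1, b 2⁆ = 0) (x y : L) :
    ⁅centreProjection b x, y⁆ = 0 := by
  simpa using b.lie_apply_eq_of_forall_basis (A' := LinearMap.id) (B := 0) (B' := LinearMap.id)
    (fun i j => by fin_cases i <;> fin_cases j <;> simp [lie_basis_two_basis h13 h23]) x y

end Heisenberg

theorem heisenberg_product_admits_general {g : Type*} [LieRing g] [LieAlgebra ℝ g]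
    (b : Module.Basis (Fin 3) ℝ g) 
    (h13 : ⁅b 0, b 2⁆ = 0) (h23 : ⁅b 1, b 2⁆ = 0) :
    ∃ 𝒥 : (g × g) →ₗ[ℝ] (g × g), (∀ x, 𝒥 (𝒥 x) = -x) ∧
      ∀ x y : g × g,
        ⁅x, y⁆ + 𝒥 ⁅𝒥 x, y⁆ + 𝒥 ⁅x, 𝒥 y⁆ - ⁅𝒥 x, 𝒥 y⁆ = 0 := by
  have hJ : IsAbelianComplexStructure (complexBlock (planeRotation b) (centreProjection b)) :=
    isAbelianComplexStructure_complexBlock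
      (planeRotation_apply_apply_sub_centreProjection_apply_apply b)
      (planeRotation_centreProjection_add_centreProjection_planeRotation b)
      (lie_planeRotation_planeRotation h13 h23) (lie_centreProjection_eq_zero h13 h23)
  exact ⟨_, hJ.apply_apply, hJ.nijenhuis_eq_zero⟩

theorem heisenberg_product_admits {g : Type*} [LieRing g] [LieAlgebra ℝ g]
    (b : Module.Basis (Fin 3) ℝ g) 
    (h12 : ⁅b 0, b 1⁆ = b 2) (h13 : ⁅b 0, b 2⁆ = 0) (h23 : ⁅b 1, b 2⁆ = 0) :
    ∃ 𝒥 : (g × g) →ₗ[ℝ] (g × g), (∀ x, 𝒥 (𝒥 x) = -x) ∧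
      ∀ x y : g × g,
        ⁅x, y⁆ + 𝒥 ⁅𝒥 x, y⁆ + 𝒥 ⁅x, 𝒥 y⁆ - ⁅𝒥 x, 𝒥 y⁆ = 0 :=
  heisenberg_product_admits_general b h13 h23
end

section
/- Let g be the 3-dimensional real Lie algebra with brackets [e₁,e₃] = e₁, [e₂,e₃] = θ·e₂, [e₁,e₂] = 0 (θ ≠ 0, θ ≠ 1), and suppose 𝒥 is an integrable complex structure on g × g. If u ∈ g × {0} is a nonzero vector with 𝒥u = λ·u + u* where u* ∈ {0} × g (i.e. u is quasi-invariant), then u does not lie in the derived subalgebra span{(e₁,0),(e₂,0)}; equivalently, the e₃-coordinate of u is nonzero. -/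
/-!
Write `D x = ⁅x, e₃⁆`; it maps `g` into `g' = span {e₁, e₂}` and acts on `g'` as `diag (1, θ)`.
Write `𝒥 (x, 0) = (𝒥₁₁ x, 𝒥₂₁ x)` and `𝒥 (e₃, 0) = (p, q)`, and let `t` be the `e₃`-coordinate
of `p`. For `w ∈ g'` with `𝒥₁₁ w = λ w`, the Nijenhuis tensor on `(w, 0)` and `(e₃, 0)` gives
`(1 - λ t) D w + (λ + t) 𝒥₁₁ (D w) = 0` and `(λ + t) 𝒥₂₁ (D w) = ⁅𝒥₂₁ w, q⁆`.
If `u ∈ g'`, the first identity makes `D u` quasi-invariant, say `𝒥₁₁ (D u) = λ₁ D u`, and shows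
that `u` is no eigenvector of `D`; comparing coefficients of `u` and `D u` in the first identity
for `D u` forces `θ = -1`, `t = 0` and `λ λ₁ = -1`. Then `D² = 1` on `g'`, and the second
identities for `u` and `D u` give `(q₃² + 1) 𝒥₂₁ u = 0`, whereas `𝒥₂₁ u ≠ 0` because `𝒥` has
no real eigenvector.
-/

namespace ProdComplexStructure

variable {g : Type*} [LieRing g] [LieAlgebra ℝ g]

structure IsR3Basis (b : Module.Basis (Fin 3) ℝ g) (θ : ℝ) : Prop where
  lie_zero_two : ⁅b 0, b 2⁆ = b 0
  lie_one_two : ⁅b 1, b 2⁆ = θ • b 1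
  lie_zero_one : ⁅b 0, b 1⁆ = 0

namespace IsR3Basis

section

variable {b : Module.Basis (Fin 3) ℝ g} {θ : ℝ} (hb : IsR3Basis b θ)
include hb

theorem lie_two (x : g) : ⁅x, b 2⁆ = b.repr x 0 • b 0 + (θ * b.repr x 1) • b 1 := by
  conv_lhs => rw [← b.sum_repr x]
  simp [Fin.sum_univ_three, add_lie, smul_lie, hb.lie_zero_two, hb.lie_one_two, smul_smul,
    mul_comm, -Module.Basis.sum_repr]

theorem repr_lie_two_two (x : g) : b.repr ⁅x, b 2⁆ 2 = 0 := by
  simp [hb.lie_two]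

theorem lie_eq (x y : g) : ⁅x, y⁆ = b.repr y 2 • ⁅x, b 2⁆ - b.repr x 2 • ⁅y, b 2⁆ := by
  have h10 : ⁅b 1, b 0⁆ = 0 := by rw [← lie_skew, hb.lie_zero_one, neg_zero]
  have h20 : ⁅b 2, b 0⁆ = -b 0 := by rw [← lie_skew, hb.lie_zero_two]
  have h21 : ⁅b 2, b 1⁆ = -(θ • b 1) := by rw [← lie_skew, hb.lie_one_two]
  have lie_zero (z : g) : ⁅z, b 0⁆ = -b.repr z 2 • b 0 := by
    conv_lhs => rw [← b.sum_repr z]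
    simp [Fin.sum_univ_three, add_lie, smul_lie, h10, h20, -Module.Basis.sum_repr]
  have lie_one (z : g) : ⁅z, b 1⁆ = -(θ * b.repr z 2) • b 1 := by
    conv_lhs => rw [← b.sum_repr z]
    simp [Fin.sum_univ_three, add_lie, smul_lie, hb.lie_zero_one, h21, smul_smul,
      -Module.Basis.sum_repr]
    module
  conv_lhs => rw [← b.sum_repr y]
  simp only [Fin.sum_univ_three, lie_add, lie_smul, lie_zero, lie_one, hb.lie_two]
  module

theorem lie_eq_of_repr_eq_zero {x : g} (hx : b.repr x 2 = 0) (y : g) :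
    ⁅x, y⁆ = b.repr y 2 • ⁅x, b 2⁆ := by
  rw [hb.lie_eq, hx, zero_smul, sub_zero]

theorem repr_lie_eq_zero (x y : g) : b.repr ⁅x, y⁆ 2 = 0 := by
  simp [hb.lie_eq x y, hb.repr_lie_two_two]

theorem lie_two_lie_two {x : g} (hx : b.repr x 2 = 0) :
    ⁅⁅x, b 2⁆, b 2⁆ = (1 + θ) • ⁅x, b 2⁆ - θ • x := by
  obtain ⟨a, c, rfl⟩ : ∃ a c : ℝ, x = a • b 0 + c • b 1 :=
    ⟨_, _, by rw [← b.sum_repr x, Fin.sum_univ_three, hx, zero_smul, add_zero]⟩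
  simp only [add_lie, smul_lie, hb.lie_zero_two, hb.lie_one_two]
  module

theorem lie_two_ne_zero (hθ : θ ≠ 0) {x : g} (hx2 : b.repr x 2 = 0) (hx : x ≠ 0) :
    ⁅x, b 2⁆ ≠ 0 := by
  intro h
  have := hb.lie_two_lie_two hx2
  rw [h, zero_lie, smul_zero, zero_sub, eq_comm, neg_eq_zero] at this
  exact hx ((smul_eq_zero.1 this).resolve_left hθ)

end

section

variable {b : Module.Basis (Fin 3) ℝ g} (hb : IsR3Basis b (-1))
include hb

theorem lie_two_lie_two_eq_self {x : g} (hx : b.repr x 2 = 0) : ⁅⁅x, b 2⁆, b 2⁆ = x := by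
  rw [hb.lie_two_lie_two hx]
  module

theorem eq_zero_of_lie_eq_smul {x y q : g} {l l₁ : ℝ} (hl : l * l₁ = -1)
    (hx : l • x = ⁅y, q⁆) (hy : l₁ • y = ⁅x, q⁆) : y = 0 := by
  have hl0 : l ≠ 0 := by rintro rfl; norm_num at hl
  have hl₁0 : l₁ ≠ 0 := by rintro rfl; norm_num at hl
  have hy2 : b.repr y 2 = 0 := by
    simpa [hb.repr_lie_eq_zero, hl₁0] using congrArg (b.repr · 2) hy
  have hx2 : b.repr x 2 = 0 := by
    simpa [hb.repr_lie_eq_zero, hl0] using congrArg (b.repr · 2) hx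
  have hDx : l • ⁅x, b 2⁆ = b.repr q 2 • y := by
    rw [← smul_lie, hx, hb.lie_eq_of_repr_eq_zero hy2, smul_lie, hb.lie_two_lie_two_eq_self hy2]
  have hDy : -y = (l * b.repr q 2) • ⁅x, b 2⁆ := by
    rw [← neg_one_smul ℝ y, ← hl, mul_smul, hy, hb.lie_eq_of_repr_eq_zero hx2, smul_smul]
  have : (b.repr q 2 ^ 2 + 1) • y = 0 := by
    linear_combination (norm := module) -hDy - b.repr q 2 • hDx
  exact (smul_eq_zero.1 this).resolve_left (by positivity)

end

end IsR3Basis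

theorem eq_neg_one_of_coeff_relations {θ t l l₁ : ℝ} (hθ : θ ≠ 0)
    (h₁ : 1 - l * t + (l + t) * l₁ = 0) (h₂ : θ * (1 - l₁ * t + (l₁ + t) * l) = 0)
    (h₃ : (1 + θ) * (1 - l₁ * t + (l₁ + t) * l₁) = 0) :
    θ = -1 ∧ t = 0 ∧ l * l₁ = -1 := by
  replace h₂ := (mul_eq_zero.1 h₂).resolve_left hθ
  have hll₁ : l * l₁ = -1 := by linear_combination (h₁ + h₂) / 2
  have hl₁ : l₁ - l ≠ 0 := by
    intro h
    rw [show l₁ = l by linarith] at hll₁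
    nlinarith [sq_nonneg l]
  have ht : t = 0 := by
    have : t * (l₁ - l) = 0 := by linear_combination (h₁ - h₂) / 2
    exact (mul_eq_zero.1 this).resolve_right hl₁
  refine ⟨?_, ht, hll₁⟩
  have : (1 + θ) * (1 + l₁ ^ 2) = 0 := by rw [ht] at h₃; linear_combination h₃
  linarith [(mul_eq_zero.1 this).resolve_right (by positivity)]

theorem apply_ne_smul_of_apply_apply_eq_neg {V : Type*} [AddCommGroup V] [Module ℝ V]
    {J : V →ₗ[ℝ] V} (hJ : ∀ x, J (J x) = -x) {x : V} (hx : x ≠ 0) (l : ℝ) : J x ≠ l • x := by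
  intro h
  have : (l ^ 2 + 1) • x = 0 := by
    have := hJ x
    rw [h, map_smul, h] at this
    linear_combination (norm := module) this
  exact hx ((smul_eq_zero.1 this).resolve_left (by positivity))

variable (𝒥 : (g × g) →ₗ[ℝ] (g × g))

def toBlocks₁₁ : g →ₗ[ℝ] g := LinearMap.fst ℝ g g ∘ₗ 𝒥 ∘ₗ LinearMap.inl ℝ g g

def toBlocks₂₁ : g →ₗ[ℝ] g := LinearMap.snd ℝ g g ∘ₗ 𝒥 ∘ₗ LinearMap.inl ℝ g g

theorem apply_inl (w : g) : 𝒥 (w, 0) = (toBlocks₁₁ 𝒥 w, toBlocks₂₁ 𝒥 w) := rfl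

variable {𝒥} (hN : ∀ x y : g × g, ⁅x, y⁆ + 𝒥 ⁅𝒥 x, y⁆ + 𝒥 ⁅x, 𝒥 y⁆ - ⁅𝒥 x, 𝒥 y⁆ = 0)
include hN

theorem nijenhuis_inl_fst (w v : g) :
    ⁅w, v⁆ + toBlocks₁₁ 𝒥 ⁅toBlocks₁₁ 𝒥 w, v⁆ + toBlocks₁₁ 𝒥 ⁅w, toBlocks₁₁ 𝒥 v⁆
      - ⁅toBlocks₁₁ 𝒥 w, toBlocks₁₁ 𝒥 v⁆ = 0 := by
  simpa [apply_inl, Bracket.bracket] using congrArg Prod.fst (hN (w, 0) (v, 0))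

theorem nijenhuis_inl_snd (w v : g) :
    toBlocks₂₁ 𝒥 ⁅toBlocks₁₁ 𝒥 w, v⁆ + toBlocks₂₁ 𝒥 ⁅w, toBlocks₁₁ 𝒥 v⁆
      - ⁅toBlocks₂₁ 𝒥 w, toBlocks₂₁ 𝒥 v⁆ = 0 := by
  simpa [apply_inl, Bracket.bracket] using congrArg Prod.snd (hN (w, 0) (v, 0))

variable {b : Module.Basis (Fin 3) ℝ g} {θ : ℝ} (hb : IsR3Basis b θ)
include hb

theorem nijenhuis_quasiInvariant_fst {w : g} {l : ℝ} (hw : b.repr w 2 = 0)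
    (hJw : toBlocks₁₁ 𝒥 w = l • w) :
    (1 - l * b.repr (toBlocks₁₁ 𝒥 (b 2)) 2) • ⁅w, b 2⁆
      + (l + b.repr (toBlocks₁₁ 𝒥 (b 2)) 2) • toBlocks₁₁ 𝒥 ⁅w, b 2⁆ = 0 := by
  have h := nijenhuis_inl_fst hN w (b 2)
  simp only [hJw, smul_lie, hb.lie_eq_of_repr_eq_zero hw (toBlocks₁₁ 𝒥 (b 2)), map_smul] at h
  linear_combination (norm := module) h

theorem nijenhuis_quasiInvariant_snd {w : g} {l : ℝ} (hw : b.repr w 2 = 0)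
    (hJw : toBlocks₁₁ 𝒥 w = l • w) :
    (l + b.repr (toBlocks₁₁ 𝒥 (b 2)) 2) • toBlocks₂₁ 𝒥 ⁅w, b 2⁆
      = ⁅toBlocks₂₁ 𝒥 w, toBlocks₂₁ 𝒥 (b 2)⁆ := by
  have h := nijenhuis_inl_snd hN w (b 2)
  simp only [hJw, smul_lie, hb.lie_eq_of_repr_eq_zero hw (toBlocks₁₁ 𝒥 (b 2)), map_smul] at h
  linear_combination (norm := module) h

theorem exists_toBlocks₁₁_lie_two_eq_smul {w : g} {l : ℝ} (hw : b.repr w 2 = 0)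
    (hJw : toBlocks₁₁ 𝒥 w = l • w) (hD : ⁅w, b 2⁆ ≠ 0) :
    ∃ l₁ : ℝ, toBlocks₁₁ 𝒥 ⁅w, b 2⁆ = l₁ • ⁅w, b 2⁆ := by
  have h := nijenhuis_quasiInvariant_fst hN hb hw hJw
  set t := b.repr (toBlocks₁₁ 𝒥 (b 2)) 2
  have hlt : l + t ≠ 0 := by
    intro hlt
    have : (1 + l ^ 2) • ⁅w, b 2⁆ = 0 := by
      rw [← h, eq_neg_of_add_eq_zero_right hlt]
      module
    exact hD ((smul_eq_zero.1 this).resolve_left (by positivity))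
  refine ⟨(l + t)⁻¹ * (l * t - 1), ?_⟩
  rw [mul_smul, eq_inv_smul_iff₀ hlt]
  linear_combination (norm := module) h

theorem linearIndependent_lie_two (hθ : θ ≠ 0) {w : g} {l : ℝ} (hw2 : b.repr w 2 = 0)
    (hw : w ≠ 0) (hJw : toBlocks₁₁ 𝒥 w = l • w) :
    LinearIndependent ℝ ![w, ⁅w, b 2⁆] := by
  rw [LinearIndependent.pair_iff' hw]
  intro k hk
  have h := nijenhuis_quasiInvariant_fst hN hb hw2 hJw
  rw [← hk, map_smul, hJw] at h
  have : (k * (1 + l ^ 2)) • w = 0 := by linear_combination (norm := module) h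
  have hk0 : k = 0 := by simpa [hw, (by positivity : 1 + l ^ 2 ≠ 0)] using this
  exact hb.lie_two_ne_zero hθ hw2 hw (by rw [← hk, hk0, zero_smul])

theorem quasiInvariant_relations (hθ : θ ≠ 0) {u : g} {l l₁ : ℝ} (hu2 : b.repr u 2 = 0)
    (hu : u ≠ 0) (hJu : toBlocks₁₁ 𝒥 u = l • u)
    (hJDu : toBlocks₁₁ 𝒥 ⁅u, b 2⁆ = l₁ • ⁅u, b 2⁆) :
    θ = -1 ∧ b.repr (toBlocks₁₁ 𝒥 (b 2)) 2 = 0 ∧ l * l₁ = -1 := by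
  have h₁ := nijenhuis_quasiInvariant_fst hN hb hu2 hJu
  have h₂ := nijenhuis_quasiInvariant_fst hN hb (hb.repr_lie_two_two u) hJDu
  set t := b.repr (toBlocks₁₁ 𝒥 (b 2)) 2
  rw [hJDu] at h₁
  rw [hb.lie_two_lie_two hu2, map_sub, map_smul, map_smul, hJDu, hJu] at h₂
  have : (1 - l * t + (l + t) * l₁) • ⁅u, b 2⁆ = 0 := by linear_combination (norm := module) h₁
  obtain ⟨hu_coeff, hDu_coeff⟩ :=
    LinearIndependent.pair_iff.1 (linearIndependent_lie_two hN hb hθ hu2 hu hJu)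
      (-(θ * (1 - l₁ * t + (l₁ + t) * l))) ((1 + θ) * (1 - l₁ * t + (l₁ + t) * l₁))
      (by linear_combination (norm := module) h₂)
  exact eq_neg_one_of_coeff_relations hθ
    ((smul_eq_zero.1 this).resolve_right (hb.lie_two_ne_zero hθ hu2 hu))
    (neg_eq_zero.1 hu_coeff) hDu_coeff

end ProdComplexStructure

theorem quasi_invariant_is_generic_general {g : Type*} [LieRing g] [LieAlgebra ℝ g]
    (b : Module.Basis (Fin 3) ℝ g) (θ : ℝ) (hθ0 : θ ≠ 0)
    (h13 : ⁅b 0, b 2⁆ = b 0) (h23 : ⁅b 1, b 2⁆ = θ • b 1) (h12 : ⁅b 0, b 1⁆ = 0)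
    (𝒥 : (g × g) →ₗ[ℝ] (g × g)) (h𝒥 : ∀ x, 𝒥 (𝒥 x) = -x)
    (hint : ∀ x y : g × g,
      ⁅x, y⁆ + 𝒥 ⁅𝒥 x, y⁆ + 𝒥 ⁅x, 𝒥 y⁆ - ⁅𝒥 x, 𝒥 y⁆ = 0)
    (u : g) (hu : u ≠ 0) (l : ℝ) (ustar : g)
    (hquasi : 𝒥 (u, 0) = (l • u, ustar)) :
    b.repr u 2 ≠ 0 := by
  open ProdComplexStructure in
  intro hu2
  have hb : IsR3Basis b θ := ⟨h13, h23, h12⟩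
  have hJu : toBlocks₁₁ 𝒥 u = l • u := congrArg Prod.fst hquasi
  obtain ⟨l₁, hJDu⟩ :=
    exists_toBlocks₁₁_lie_two_eq_smul hint hb hu2 hJu (hb.lie_two_ne_zero hθ0 hu2 hu)
  obtain ⟨rfl, ht, hll₁⟩ := quasiInvariant_relations hint hb hθ0 hu2 hu hJu hJDu
  have h₁ := nijenhuis_quasiInvariant_snd hint hb hu2 hJu
  have h₂ := nijenhuis_quasiInvariant_snd hint hb (hb.repr_lie_two_two u) hJDu
  rw [ht, add_zero] at h₁ h₂
  rw [hb.lie_two_lie_two_eq_self hu2] at h₂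
  have hustar : toBlocks₂₁ 𝒥 u ≠ 0 := by
    intro h0
    refine apply_ne_smul_of_apply_apply_eq_neg h𝒥 (x := (u, 0)) (by simpa using hu) l ?_
    rw [apply_inl, hJu, h0, Prod.smul_mk, smul_zero]
  exact hustar (hb.eq_zero_of_lie_eq_smul hll₁ h₁ h₂)

theorem quasi_invariant_is_generic {g : Type*} [LieRing g] [LieAlgebra ℝ g]
    (b : Module.Basis (Fin 3) ℝ g) (θ : ℝ) (hθ0 : θ ≠ 0) (hθ1 : θ ≠ 1)
    (h13 : ⁅b 0, b 2⁆ = b 0) (h23 : ⁅b 1, b 2⁆ = θ • b 1) (h12 : ⁅b 0, b 1⁆ = 0)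
    (𝒥 : (g × g) →ₗ[ℝ] (g × g)) (h𝒥 : ∀ x, 𝒥 (𝒥 x) = -x)
    (hint : ∀ x y : g × g,
      ⁅x, y⁆ + 𝒥 ⁅𝒥 x, y⁆ + 𝒥 ⁅x, 𝒥 y⁆ - ⁅𝒥 x, 𝒥 y⁆ = 0)
    (u : g) (hu : u ≠ 0) (l : ℝ) (ustar : g)
    (hquasi : 𝒥 (u, 0) = (l • u, ustar)) :
    b.repr u 2 ≠ 0 :=
  quasi_invariant_is_generic_general b θ hθ0 h13 h23 h12 𝒥 h𝒥 hint u hu l ustar hquasi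
end
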